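/- Let {v_a : a ∈ [n]} be unit vectors in ℂ^s generating a correlation matrix P of rank at least 3, and let c ∈ [n] be an index with v_c not in the span of {v_a : a ≠ c} and v_c not orthogonal to all other vectors. Let Π be the orthogonal projection onto span{v_a : a ≠ c}, define R(a,b) = ⟨v_a, Π v_b⟩/(‖Π v_a‖·‖Π v_b‖), and define Q(a,b) = ‖Π v_c‖ if a ≠ b and c ∈ {a,b}, and Q(a,b) = 1 otherwise. Then P = R ⊙ Q, R is a correlation matrix of rank rank(P) − 1, and Q is a correlation matrix of rank 2. -/

import Mathlib

open scoped ComplexOrder ComplexInnerProductSpace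

/-- A correlation matrix: positive semidefinite with ones on the diagonal. -/
def IsCorrMat {n : ℕ} (P : Matrix (Fin n) (Fin n) ℂ) : Prop :=
  P.PosSemidef ∧ ∀ a, P a a = 1

/-- `P` is `r`-decomposable: a finite Schur (entrywise) product of correlation
matrices each of rank at most `r`. -/
def IsDecomposable {n : ℕ} (r : ℕ) (P : Matrix (Fin n) (Fin n) ℂ) : Prop :=
  ∃ m : ℕ, 0 < m ∧ ∃ R : Fin m → Matrix (Fin n) (Fin n) ℂ,
    (∀ i, IsCorrMat (R i) ∧ (R i).rank ≤ r) ∧ ∀ a b, P a b = ∏ i, R i a b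

/-!
All three matrices are Gram matrices. `P` is the Gram matrix of the `v a`, and `R` that of the
normalized projections `Π v a / ‖Π v a‖`, which span `K = span {v a | a ≠ c}`; since `v c ∉ K`,
the rank drops by exactly one. Only `Π v c` differs from `v c`, with norm `t := ‖Π v c‖`, and
`0 < t < 1` because `v c` is neither orthogonal to `K` nor in `K`. Dividing out the norms leaves
`Q`, the Gram matrix of the unit vectors `(t, √(1 - t²))` at `c` and `(1, 0)` elsewhere in `ℂ²`;
these span `ℂ²` because `t < 1`.
-/

namespace Matrix

variable {𝕜 E ι : Type*} [RCLike 𝕜] [NormedAddCommGroup E] [InnerProductSpace 𝕜 E]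

theorem rank_gram [Fintype ι] [FiniteDimensional 𝕜 E] (v : ι → E) :
    (gram 𝕜 v).rank = Module.finrank 𝕜 (Submodule.span 𝕜 (Set.range v)) := by
  let b := stdOrthonormalBasis 𝕜 E
  let e : E ≃ₗ[𝕜] (Fin _ → 𝕜) := b.repr.toLinearEquiv.trans (WithLp.linearEquiv 2 𝕜 _)
  rw [gram_eq_conjTranspose_mul b, rank_conjTranspose_mul_self, rank_eq_finrank_span_cols,
    show Set.range (of fun i j ↦ b.repr (v j) i).col = e '' Set.range v by
      rw [← Set.range_comp]; rfl,
    ← LinearEquiv.coe_coe, ← Submodule.map_span]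
  exact LinearEquiv.finrank_map_eq _ _

end Matrix

theorem isCorrMat_gram {E : Type*} [NormedAddCommGroup E] [InnerProductSpace ℂ E] {n : ℕ}
    {v : Fin n → E} (hv : ∀ a, ‖v a‖ = 1) : IsCorrMat (Matrix.gram ℂ v) :=
  ⟨Matrix.posSemidef_gram ℂ v, fun a => by simp [Matrix.gram_apply, hv]⟩

theorem Submodule.span_range_eq_span_ne_sup_span_singleton {R M ι : Type*} [Semiring R]
    [AddCommMonoid M] [Module R M] (v : ι → M) (c : ι) :
    span R (Set.range v) = span R {x | ∃ a, a ≠ c ∧ x = v a} ⊔ span R {v c} := by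
  rw [← span_union]
  congr 1
  ext x
  constructor
  · rintro ⟨a, rfl⟩
    by_cases ha : a = c
    · exact Or.inr (ha ▸ rfl)
    · exact Or.inl ⟨a, ha, rfl⟩
  · rintro (⟨a, -, rfl⟩ | rfl) <;> exact ⟨_, rfl⟩

section InnerProductSpace

variable {𝕜 E : Type*} [RCLike 𝕜] [NormedAddCommGroup E] [InnerProductSpace 𝕜 E]

theorem inner_div_norm_mul_norm_eq_inner_smul (x y : E) :
    inner 𝕜 x y / ((‖x‖ : 𝕜) * ‖y‖) = inner 𝕜 ((‖x‖ : 𝕜)⁻¹ • x) ((‖y‖ : 𝕜)⁻¹ • y) := by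
  rw [inner_smul_left, inner_smul_right, map_inv₀, RCLike.conj_ofReal, div_eq_inv_mul, mul_inv]
  ring

variable (K : Submodule 𝕜 E) [K.HasOrthogonalProjection]

theorem Submodule.inner_starProjection_right_eq_inner_starProjection (x y : E) :
    inner 𝕜 x (K.starProjection y) = inner 𝕜 (K.starProjection x) (K.starProjection y) := by
  rw [K.inner_starProjection_left_eq_right,
    K.starProjection_eq_self_iff.mpr (K.starProjection_apply_mem y)]

theorem Submodule.inner_starProjection_right_eq_inner_of_mem_left {x : E} (hx : x ∈ K) (y : E) :
    inner 𝕜 x (K.starProjection y) = inner 𝕜 x y := by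
  rw [← K.inner_starProjection_left_eq_right, K.starProjection_eq_self_iff.mpr hx]

theorem Submodule.starProjection_ne_zero_of_inner_ne_zero {x y : E} (hy : y ∈ K)
    (h : inner 𝕜 x y ≠ 0) : K.starProjection x ≠ 0 := fun h0 => h <| by
  rw [← K.starProjection_eq_self_iff.mpr hy, ← K.inner_starProjection_left_eq_right, h0,
    inner_zero_left]

theorem Submodule.norm_starProjection_lt_of_notMem {x : E} (hx : x ∉ K) :
    ‖K.starProjection x‖ < ‖x‖ :=
  (K.norm_starProjection_apply_le x).lt_of_ne fun h => hx ((K.mem_iff_norm_starProjection x).mpr h)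

end InnerProductSpace

section ProjectionAwayFromOneVector

variable {𝕜 E ι : Type*} [RCLike 𝕜] [NormedAddCommGroup E] [InnerProductSpace 𝕜 E]
  {K : Submodule 𝕜 E} [K.HasOrthogonalProjection] {v : ι → E} {c : ι}

theorem span_range_inv_norm_smul_starProjection (hv : ∀ a, a ≠ c → ‖v a‖ = 1)
    (hK : K = Submodule.span 𝕜 {x | ∃ a, a ≠ c ∧ x = v a}) :
    Submodule.span 𝕜 (Set.range fun a =>
      (‖K.starProjection (v a)‖ : 𝕜)⁻¹ • K.starProjection (v a)) = K := by
  refine le_antisymm (Submodule.span_le.mpr ?_) ?_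
  · rintro _ ⟨a, rfl⟩
    exact K.smul_mem _ (K.starProjection_apply_mem _)
  · conv_lhs => rw [hK]
    refine Submodule.span_mono ?_
    rintro _ ⟨a, ha, rfl⟩
    refine ⟨a, ?_⟩
    have hfix : K.starProjection (v a) = v a :=
      K.starProjection_eq_self_iff.mpr (hK ▸ Submodule.subset_span ⟨a, ha, rfl⟩)
    simp [hfix, hv a ha]

theorem inner_eq_inner_starProjection_div_mul [DecidableEq ι] (hv : ∀ a, ‖v a‖ = 1)
    (hvK : ∀ a, a ≠ c → v a ∈ K) (hpc : K.starProjection (v c) ≠ 0) (a b : ι) :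
    inner 𝕜 (v a) (v b) = inner 𝕜 (v a) (K.starProjection (v b)) /
      ((‖K.starProjection (v a)‖ : 𝕜) * ‖K.starProjection (v b)‖) *
      (if a ≠ b ∧ (a = c ∨ b = c) then (‖K.starProjection (v c)‖ : 𝕜) else 1) := by
  have hfix : ∀ a, a ≠ c → K.starProjection (v a) = v a := fun a ha =>
    K.starProjection_eq_self_iff.mpr (hvK a ha)
  have hpc' : (‖K.starProjection (v c)‖ : 𝕜) ≠ 0 := by simpa using hpc
  rcases eq_or_ne a c with rfl | hac
  · rcases eq_or_ne b a with rfl | hba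
    · rw [K.inner_starProjection_right_eq_inner_starProjection, inner_self_eq_norm_sq_to_K,
        inner_self_eq_norm_sq_to_K, hv, if_neg (by tauto), RCLike.ofReal_one]
      field_simp
    · rw [hfix b hba, hv b, if_pos ⟨hba.symm, Or.inl rfl⟩, RCLike.ofReal_one]
      field_simp
  · rcases eq_or_ne b c with rfl | hbc
    · rw [K.inner_starProjection_right_eq_inner_of_mem_left (hvK a hac), hfix a hac, hv a,
        if_pos ⟨hac, Or.inr rfl⟩, RCLike.ofReal_one]
      field_simp
    · rw [hfix a hac, hfix b hbc, hv a, hv b, if_neg (by tauto)]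
      simp

end ProjectionAwayFromOneVector

noncomputable def cosSinVec (x : ℝ) : EuclideanSpace ℂ (Fin 2) := !₂[x, √(1 - x ^ 2)]

theorem inner_cosSinVec (x y : ℝ) :
    ⟪cosSinVec x, cosSinVec y⟫ = ((x * y + √(1 - x ^ 2) * √(1 - y ^ 2) : ℝ) : ℂ) := by
  simp only [cosSinVec, PiLp.inner_apply, Fin.sum_univ_two]
  simp [mul_comm]

theorem linearIndependent_cosSinVec {t : ℝ} (ht : t ^ 2 < 1) :
    LinearIndependent ℂ ![cosSinVec t, cosSinVec 1] := by
  have hs : (√(1 - t ^ 2) : ℂ) ≠ 0 := by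
    exact_mod_cast (Real.sqrt_pos.mpr (by linarith)).ne'
  rw [linearIndependent_fin2]
  refine ⟨fun h => by simpa [cosSinVec] using congrArg (· 0) h, fun a h => hs ?_⟩
  simpa [cosSinVec] using (congrArg (· 1) h).symm

section CosSinVecFamily

variable {ι : Type*} [DecidableEq ι]

theorem inner_cosSinVec_ite {t : ℝ} (ht : t ^ 2 ≤ 1) (c a b : ι) :
    ⟪cosSinVec (if a = c then t else 1), cosSinVec (if b = c then t else 1)⟫ =
      if a ≠ b ∧ (a = c ∨ b = c) then (t : ℂ) else 1 := by
  rw [inner_cosSinVec]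
  rcases eq_or_ne a c with rfl | hac
  · rcases eq_or_ne b a with rfl | hba
    · simp [← sq, Real.sq_sqrt (sub_nonneg.mpr ht)]
    · simp [hba, hba.symm]
  · rcases eq_or_ne b c with rfl | hbc
    · simp [hac]
    · simp [hac, hbc]

theorem span_range_cosSinVec_ite {t : ℝ} (ht : t ^ 2 < 1) {c a : ι} (ha : a ≠ c) :
    Submodule.span ℂ (Set.range fun b => cosSinVec (if b = c then t else 1)) = ⊤ := by
  refine eq_top_mono (Submodule.span_mono ?_)
    ((linearIndependent_cosSinVec ht).span_eq_top_of_card_eq_finrank (by simp))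
  rintro _ ⟨i, rfl⟩
  fin_cases i
  · exact ⟨c, by simp⟩
  · exact ⟨a, by simp [ha]⟩

end CosSinVecFamily

theorem stmt7_general (n s : ℕ) (P : Matrix (Fin n) (Fin n) ℂ)
    (v : Fin n → EuclideanSpace ℂ (Fin s)) (hv : ∀ a, ‖v a‖ = 1)
    (hgen : ∀ a b, P a b = ⟪v a, v b⟫) (c : Fin n)
    (hc : v c ∉ Submodule.span ℂ {x | ∃ a, a ≠ c ∧ x = v a})
    (hnotorth : ∃ a, a ≠ c ∧ ⟪v c, v a⟫ ≠ 0)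
    (K : Submodule ℂ (EuclideanSpace ℂ (Fin s)))
    (hK : K = Submodule.span ℂ {x | ∃ a, a ≠ c ∧ x = v a})
    (R Q : Matrix (Fin n) (Fin n) ℂ)
    (hR : ∀ a b, R a b =
      ⟪v a, (K.orthogonalProjection (v b) : EuclideanSpace ℂ (Fin s))⟫ /
        (((‖(K.orthogonalProjection (v a) : EuclideanSpace ℂ (Fin s))‖ : ℝ) : ℂ) *
         ((‖(K.orthogonalProjection (v b) : EuclideanSpace ℂ (Fin s))‖ : ℝ) : ℂ)))
    (hQ : ∀ a b, Q a b = if a ≠ b ∧ (a = c ∨ b = c) then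
      (((‖(K.orthogonalProjection (v c) : EuclideanSpace ℂ (Fin s))‖ : ℝ) : ℂ)) else 1) :
    P = Matrix.hadamard R Q ∧ IsCorrMat R ∧ R.rank = P.rank - 1 ∧
      IsCorrMat Q ∧ Q.rank = 2 := by
  simp only [Submodule.coe_orthogonalProjectionOnto_apply] at hR hQ
  have hvK : ∀ a, a ≠ c → v a ∈ K := fun a ha => hK ▸ Submodule.subset_span ⟨a, ha, rfl⟩
  obtain ⟨a₀, ha₀, hinner⟩ := hnotorth
  have hp : ∀ a, K.starProjection (v a) ≠ 0 := fun a => by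
    rcases eq_or_ne a c with rfl | ha
    · exact K.starProjection_ne_zero_of_inner_ne_zero (hvK a₀ ha₀) hinner
    · rw [K.starProjection_eq_self_iff.mpr (hvK a ha)]
      exact norm_ne_zero_iff.mp (by simp [hv])
  have ht : ‖K.starProjection (v c)‖ ^ 2 < 1 :=
    pow_lt_one₀ (norm_nonneg _) (hv c ▸ K.norm_starProjection_lt_of_notMem (hK ▸ hc)) two_ne_zero
  have hRw : R = Matrix.gram ℂ fun a =>
      (‖K.starProjection (v a)‖ : ℂ)⁻¹ • K.starProjection (v a) := Matrix.ext fun a b => by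
    rw [hR, K.inner_starProjection_right_eq_inner_starProjection]
    exact inner_div_norm_mul_norm_eq_inner_smul _ _
  have hQu : Q = Matrix.gram ℂ fun a =>
      cosSinVec (if a = c then ‖K.starProjection (v c)‖ else 1) := Matrix.ext fun a b => by
    rw [hQ, Matrix.gram_apply, inner_cosSinVec_ite ht.le]
  have hrankP : P.rank = Module.finrank ℂ K + 1 := by
    rw [show P = Matrix.gram ℂ v from Matrix.ext hgen, Matrix.rank_gram,
      Submodule.span_range_eq_span_ne_sup_span_singleton, ← hK,
      Submodule.finrank_sup_span_singleton (hK ▸ hc)]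
  have hrankR : R.rank = Module.finrank ℂ K := by
    rw [hRw, Matrix.rank_gram]
    exact congrArg (fun S : Submodule ℂ _ => Module.finrank ℂ S)
      (span_range_inv_norm_smul_starProjection (fun a _ => hv a) hK)
  refine ⟨Matrix.ext fun a b => ?_, hRw ▸ isCorrMat_gram fun a => norm_smul_inv_norm (hp a),
    by omega, ⟨hQu ▸ Matrix.posSemidef_gram ℂ _, fun a => by simp [hQ]⟩, ?_⟩
  · rw [Matrix.hadamard_apply, hR, hQ, hgen]
    exact inner_eq_inner_starProjection_div_mul hv hvK (hp c) a b
  · rw [hQu, Matrix.rank_gram, span_range_cosSinVec_ite ht ha₀, finrank_top,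
      finrank_euclideanSpace_fin]

/-- The explicit construction: with `Π` the orthogonal projection onto the span of the
vectors other than `v c`, and `R`, `Q` as defined, `P = R ⊙ Q`, `R` is a correlation
matrix of rank `rank P - 1`, and `Q` is a correlation matrix of rank 2. -/
theorem stmt7 (n s : ℕ) (P : Matrix (Fin n) (Fin n) ℂ)
    (v : Fin n → EuclideanSpace ℂ (Fin s)) (hv : ∀ a, ‖v a‖ = 1)
    (hgen : ∀ a b, P a b = ⟪v a, v b⟫) (hrank : 3 ≤ P.rank) (c : Fin n)
    (hc : v c ∉ Submodule.span ℂ {x | ∃ a, a ≠ c ∧ x = v a})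
    (hnotorth : ∃ a, a ≠ c ∧ ⟪v c, v a⟫ ≠ 0)
    (K : Submodule ℂ (EuclideanSpace ℂ (Fin s)))
    (hK : K = Submodule.span ℂ {x | ∃ a, a ≠ c ∧ x = v a})
    (R Q : Matrix (Fin n) (Fin n) ℂ)
    (hR : ∀ a b, R a b =
      ⟪v a, (K.orthogonalProjection (v b) : EuclideanSpace ℂ (Fin s))⟫ /
        (((‖(K.orthogonalProjection (v a) : EuclideanSpace ℂ (Fin s))‖ : ℝ) : ℂ) *
         ((‖(K.orthogonalProjection (v b) : EuclideanSpace ℂ (Fin s))‖ : ℝ) : ℂ)))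
    (hQ : ∀ a b, Q a b = if a ≠ b ∧ (a = c ∨ b = c) then
      (((‖(K.orthogonalProjection (v c) : EuclideanSpace ℂ (Fin s))‖ : ℝ) : ℂ)) else 1) :
    P = Matrix.hadamard R Q ∧ IsCorrMat R ∧ R.rank = P.rank - 1 ∧
      IsCorrMat Q ∧ Q.rank = 2 :=
  stmt7_general n s P v hv hgen c hc hnotorth K hK R Q hR hQ
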